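/- Let T be a triangulated category, A an abelian category with enough projectives and of finite global dimension, and F : T → A a homological functor with a shift compatibility F(ΣX) ≅ F(X)[1], satisfying: (i) if F(C) is projective then F : [C,X] → Hom_A(F(C), F(X)) is an isomorphism for all X; and (ii) every projective P of A is of the form F(G) for some G in T. Then F is conservative on T: if f : X → Y is a morphism in T such that F(Σ^n f) is an isomorphism for all n ∈ Z, then f is an isomorphism in T. -/

import Mathlib

/-!
STATEMENT 13: Let `T` be a triangulated category, `A` an abelian category with enough
projectives and finite global dimension, and `F : T ⥤ A` a homological functor with a shift
compatibility `F(ΣX) ≅ F(X)[1]` satisfying: (i) if `F(C)` is projective then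
`F : [C, X] → Hom_A(F C, F X)` is bijective for all `X`; (ii) every projective of `A` is
realized as `F(G)`.  Then `F` is conservative in the strong sense: if `F(Σⁿ f)` is an
isomorphism for all `n : ℤ`, then `f` is an isomorphism.
-/

open CategoryTheory CategoryTheory.Limits CategoryTheory.Pretriangulated

/-- Projective dimension at most `n`, defined recursively via syzygies. -/
def projDimLE (A : Type*) [Category A] [Abelian A] : ℕ → A → Prop
  | 0, X => Projective X
  | (n + 1), X => Projective X ∨
      ∃ (P : A) (p : P ⟶ X), Epi p ∧ Projective P ∧ projDimLE A n (kernel p)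

lemma projDimLE_of_iso {A : Type*} [Category A] [Abelian A] :
    ∀ (d : ℕ) {M N : A}, (M ≅ N) → projDimLE A d M → projDimLE A d N
  | 0, M, N, i, h => Projective.of_iso i h
  | (d+1), M, N, i, h => by
    obtain (h | ⟨P, p, hp, hP, hk⟩) := h
    · exact Or.inl (Projective.of_iso i h)
    · refine Or.inr ⟨P, p ≫ i.hom, epi_comp _ _, hP, ?_⟩
      exact projDimLE_of_iso d (kernelCompMono p i.hom).symm hk

lemma projDimLE_map_equiv {A : Type*} [Category A] [Abelian A] (e : A ≌ A) :
    ∀ (d : ℕ) (M : A), projDimLE A d M → projDimLE A d (e.functor.obj M)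
  | 0, M, h => (e.map_projective_iff M).2 h
  | (d+1), M, h => by
    obtain (h | ⟨P, p, hp, hP, hk⟩) := h
    · exact Or.inl ((e.map_projective_iff M).2 h)
    · refine Or.inr ⟨e.functor.obj P, e.functor.map p, inferInstance,
        (e.map_projective_iff P).2 hP, ?_⟩
      exact projDimLE_of_iso d (PreservesKernel.iso e.functor p)
        (projDimLE_map_equiv e d _ hk)

theorem homological_functor_conservative
    {T A : Type*} [Category T] [Category A]
    [HasZeroObject T] [Preadditive T] [HasShift T ℤ]
    [∀ n : ℤ, (shiftFunctor T n).Additive] [Pretriangulated T]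
    [Abelian A] [EnoughProjectives A]
    (hfin : ∃ d : ℕ, ∀ X : A, projDimLE A d X)
    (F : T ⥤ A) [F.IsHomological]
    (e : A ≌ A) (compat : shiftFunctor T (1 : ℤ) ⋙ F ≅ F ⋙ e.functor)
    (hi : ∀ (C X : T), Projective (F.obj C) →
      Function.Bijective (fun g : C ⟶ X => F.map g))
    (hii : ∀ P : A, Projective P → ∃ G : T, Nonempty (F.obj G ≅ P))
    {X Y : T} (f : X ⟶ Y)
    (hf : ∀ n : ℤ, IsIso (F.map ((shiftFunctor T n).map f))) :
    IsIso f := by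
  obtain ⟨Z, g, h, hT⟩ := Pretriangulated.distinguished_cocone_triangle f
  -- `F f` is an isomorphism (compare with the shift by `0`)
  have hFf : IsIso (F.map f) := by
    have hnat := (shiftFunctorZero T ℤ).hom.naturality f
    have hfe : f = (shiftFunctorZero T ℤ).inv.app X ≫ (shiftFunctor T (0 : ℤ)).map f ≫
        (shiftFunctorZero T ℤ).hom.app Y := by
      rw [hnat]
      simp
    rw [hfe, F.map_comp, F.map_comp]
    have := hf 0
    infer_instance
  have hFf1 : IsIso (F.map (f⟦(1 : ℤ)⟧')) := hf 1
  -- `F g = 0`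
  have hz2 : F.map g = 0 := by
    have ex := F.map_distinguished_exact _ hT
    exact ex.epi_f_iff.1 (by show Epi (F.map f); infer_instance)
  -- `F h = 0`
  have hz3 : F.map h = 0 := by
    have c : h ≫ f⟦(1 : ℤ)⟧' = 0 := comp_distTriang_mor_zero₃₁ _ hT
    haveI : Mono (F.map (f⟦(1 : ℤ)⟧')) := inferInstance
    exact zero_of_comp_mono (F.map (f⟦(1 : ℤ)⟧'))
      (by rw [← F.map_comp, c, F.map_zero])
  -- `F Z = 0`
  have hFZ : IsZero (F.obj Z) := by
    have ex := F.map_distinguished_exact _ (rot_of_distTriang _ hT)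
    exact ex.isZero_of_both_zeros hz2 hz3
  -- base case: maps from objects with projective image vanish
  have base : ∀ (W : T), Projective (F.obj W) → ∀ φ : W ⟶ Z, φ = 0 := by
    intro W hW φ
    apply (hi W Z hW).injective
    exact hFZ.eq_of_tgt _ _
  -- induction on the projective dimension
  have key : ∀ (d : ℕ) (W : T), projDimLE A d (F.obj W) → ∀ φ : W ⟶ Z, φ = 0 := by
    intro d
    induction d with
    | zero => exact fun W hW => base W hW
    | succ d ih =>
      intro W hW φ
      obtain (hW | ⟨P, p, hp, hP, hk⟩) := hW
      · exact base W hW φ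
      · obtain ⟨G, ⟨i⟩⟩ := hii P hP
        have hFG : Projective (F.obj G) := Projective.of_iso i.symm hP
        obtain ⟨g', hg'⟩ := (hi G W hFG).surjective (i.hom ≫ p)
        have hg' : F.map g' = i.hom ≫ p := hg'
        haveI hepi : Epi (F.map g') := by
          rw [hg']; exact epi_comp _ _
        obtain ⟨Q, u, v, hT'⟩ := Pretriangulated.distinguished_cocone_triangle g'
        have hgφ : g' ≫ φ = 0 := base G hFG (g' ≫ φ)
        obtain ⟨ψ, hψ⟩ := Triangle.yoneda_exact₂ _ hT' φ hgφ
        -- `F u = 0`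
        have hFu : F.map u = 0 := by
          have ex := F.map_distinguished_exact _ hT'
          exact ex.epi_f_iff.1 hepi
        -- `F v` is a mono
        have ex1 := F.map_distinguished_exact _ (rot_of_distTriang _ hT')
        haveI hmono : Mono (F.map v) := ex1.mono_g hFu
        -- `F Q` is the kernel of `F (g'⟦1⟧)`
        have hrot := rot_of_distTriang _ (rot_of_distTriang _ hT')
        have ex2 := F.map_distinguished_exact _ hrot
        haveI : Mono (((shortComplexOfDistTriangle _ hrot).map F).f) := hmono
        have isoQ0 := ex2.fIsKernel.conePointUniqueUpToIso
          (kernelIsKernel (((shortComplexOfDistTriangle _ hrot).map F).g))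
        have hgeq : (((shortComplexOfDistTriangle _ hrot).map F).g) =
            F.map (-(g'⟦(1 : ℤ)⟧')) := rfl
        have isoQ : F.obj Q ≅ kernel (F.map (-(g'⟦(1 : ℤ)⟧'))) :=
          isoQ0 ≪≫ kernelIsoOfEq hgeq
        -- rewrite that kernel
        have eqneg : F.map (-(g'⟦(1 : ℤ)⟧')) = F.map (g'⟦(1 : ℤ)⟧') ≫ (-𝟙 _) := by
          simp
        have eqcompat : F.map (g'⟦(1 : ℤ)⟧') =
            compat.hom.app G ≫ (e.functor.map (F.map g') ≫ compat.inv.app W) := by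
          have hn := compat.hom.naturality g'
          dsimp at hn
          rw [← cancel_mono (compat.hom.app W), hn]
          simp
        have hker : F.obj Q ≅ e.functor.obj (kernel p) :=
          isoQ ≪≫ kernelIsoOfEq eqneg ≪≫ kernelCompMono _ _ ≪≫ kernelIsoOfEq eqcompat
            ≪≫ kernelIsIsoComp _ _ ≪≫ kernelCompMono _ _
            ≪≫ (PreservesKernel.iso e.functor (F.map g')).symm
            ≪≫ e.functor.mapIso (kernelIsoOfEq hg' ≪≫ kernelIsIsoComp _ _)
        have hQ : projDimLE A d (F.obj Q) :=
          projDimLE_of_iso d hker.symm (projDimLE_map_equiv e d _ hk)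
        rw [hψ, ih Q hQ ψ]
        exact Limits.comp_zero
  obtain ⟨d, hd⟩ := hfin
  have hZ : IsZero Z := by
    rw [IsZero.iff_id_eq_zero]
    exact key d Z (hd _) (𝟙 Z)
  exact (Triangle.isZero₃_iff_isIso₁ _ hT).1 hZ
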